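/- arXiv:1912.00548 — 2 statements merged into one kernel-verified Lean document; each statement's English description precedes it below -/
import Mathlib

section
/- Let Y, T ⊂ P^3 be integral plane curves (i.e., each spans a 2-plane in P^3) with Y ≠ T and ⟨Y ∪ T⟩ = P^3. If there exists a Segre point o of the pair (Y, T) — i.e., a point o ∉ Y ∪ T such that π_o(Y) = π_o(T) — then o does not lie in either plane ⟨Y⟩ or ⟨T⟩, and the projection from o induces a linear isomorphism u : ⟨Y⟩ → ⟨T⟩ mapping Y onto T and fixing pointwise the line ⟨Y⟩ ∩ ⟨T⟩. -/
open MvPolynomial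

noncomputable section

namespace EL

variable {k : Type} [Field k] {n : ℕ}

/-- Projective space of (vector) dimension `n` over `k`. -/
abbrev PS (k : Type) [Field k] (n : ℕ) : Type := Projectivization k (Fin n → k)

/-- Projective vanishing set of a polynomial (intended to be homogeneous). -/
def V0 (f : MvPolynomial (Fin n) k) : Set (PS k n) :=
  {p | ∀ (v : Fin n → k) (hv : v ≠ 0), Projectivization.mk k v hv = p → eval v f = 0}

/-- The Zariski topology on projective space, generated by complements of vanishing
sets of homogeneous polynomials. -/
instance : TopologicalSpace (PS k n) :=
  TopologicalSpace.generateFrom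
    {U | ∃ (d : ℕ) (f : MvPolynomial (Fin n) k), f.IsHomogeneous d ∧ U = (V0 f)ᶜ}

/-- The linear span (as a submodule of the cone) of a set of projective points. -/
def pspan (S : Set (PS k n)) : Submodule k (Fin n → k) := ⨆ p ∈ S, p.submodule

/-- The projective linear subspace associated to a submodule. -/
def linSet (W : Submodule k (Fin n → k)) : Set (PS k n) := {p | p.submodule ≤ W}

/-- `q` lies in the projective span of `S`. -/
def memSpan (q : PS k n) (S : Set (PS k n)) : Prop := q.submodule ≤ pspan S

/-- The projective dimension of the span of `S`. -/
def spanDim (S : Set (PS k n)) : ℕ := Module.finrank k ↥(pspan S) - 1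

/-- `S` is nondegenerate (spans the ambient projective space). -/
def Nondeg (S : Set (PS k n)) : Prop := pspan S = ⊤

/-- `S` is a projective linear subspace of projective dimension `d`. -/
def IsLin (S : Set (PS k n)) (d : ℕ) : Prop :=
  ∃ W : Submodule k (Fin n → k), Module.finrank k ↥W = d + 1 ∧ S = linSet W

/-- Dimension of a subset, as topological Krull dimension. -/
def pdim (S : Set (PS k n)) : WithBot ℕ∞ := topologicalKrullDim ↥S

/-- An integral (sub)variety: an irreducible Zariski-closed set. -/
def IsVariety (S : Set (PS k n)) : Prop := IsClosed S ∧ IsIrreducible S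

/-- A property holds for a general point of projective space. -/
def Generic (P : PS k n → Prop) : Prop :=
  ∃ U : Set (PS k n), IsOpen U ∧ Dense U ∧ ∀ q ∈ U, P q

/-- A property holds for a general point of the set `S`. -/
def GenericIn (S : Set (PS k n)) (P : PS k n → Prop) : Prop :=
  ∃ U : Set (PS k n), IsOpen U ∧ S ⊆ closure (S ∩ U) ∧ ∀ q ∈ S ∩ U, P q

/-- A property holds for a general tuple of points of projective space. -/
def GenericP {ι : Type} (P : (ι → PS k n) → Prop) : Prop :=
  ∃ U : Set (ι → PS k n), IsOpen U ∧ Dense U ∧ ∀ z ∈ U, P z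

/-- `q` is spanned by some `s` points of `X`. -/
def hasDecomp (X : Set (PS k n)) (q : PS k n) (s : ℕ) : Prop :=
  ∃ A : Finset (PS k n), ↑A ⊆ X ∧ A.card = s ∧ memSpan q ↑A

/-- The `X`-rank of a point `q`. -/
def rk (X : Set (PS k n)) (q : PS k n) : ℕ := sInf {s | hasDecomp X q s}

/-- `A` irredundantly spans `q`. -/
def Irredundant (q : PS k n) (A : Finset (PS k n)) : Prop :=
  memSpan q ↑A ∧ ∀ B : Finset (PS k n), B ⊂ A → ¬ memSpan q ↑B

/-- The set `𝒮(X,q)` of minimal irredundant decompositions of `q` by points of `X`. -/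
def decomps (X : Set (PS k n)) (q : PS k n) : Set (Finset (PS k n)) :=
  {A | ↑A ⊆ X ∧ A.card = rk X q ∧ Irredundant q A}

/-- The entry locus of `q` with respect to `X`. -/
def entryLocus (X : Set (PS k n)) (q : PS k n) : Set (PS k n) :=
  closure (⋃ A ∈ decomps X q, (↑A : Set (PS k n)))

/-- The `s`-th secant variety of `X`. -/
def secant (X : Set (PS k n)) (s : ℕ) : Set (PS k n) :=
  closure {q | hasDecomp X q s}

/-- The generic `X`-rank: least `s` whose secant fills the span of `X`. -/
def rgen (X : Set (PS k n)) : ℕ := sInf {s | secant X s = linSet (pspan X)}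

/-- Type I: the general entry locus is irreducible. -/
def TypeI (X : Set (PS k n)) : Prop := Generic (fun q => IsIrreducible (entryLocus X q))

/-- Type II: the general entry locus is reducible. -/
def TypeII (X : Set (PS k n)) : Prop := Generic (fun q => ¬ IsIrreducible (entryLocus X q))

/-- Type A: the entry locus does not change at a general point of its span. -/
def TypeA (X : Set (PS k n)) : Prop :=
  Generic (fun q => GenericIn (linSet (pspan (entryLocus X q)))
    (fun o => entryLocus X o = entryLocus X q))

/-- `S` (of dimension `m`) has degree `d`: `d` is the largest finite number of points cut
on `S` by a linear subspace of complementary dimension. -/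
def HasDegree (S : Set (PS k n)) (m d : ℕ) : Prop :=
  IsGreatest {t | ∃ L : Set (PS k n), IsLin L (n - 1 - m) ∧ (S ∩ L).Finite ∧
    (S ∩ L).ncard = t} d

/-- All secant varieties of `Y` (of dimension `m`) have the expected dimension. -/
def NonDefective (Y : Set (PS k n)) (m : ℕ) : Prop :=
  ∀ s : ℕ, 1 ≤ s →
    pdim (secant Y s) = ((min ((m+1)*s - 1) (spanDim Y) : ℕ) : WithBot ℕ∞)

/-- `π_o(T) ⊆ π_o(Y)`: every point of `T` (other than `o`) is collinear with `o`
and a point of `Y`. -/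
def projLE (o : PS k n) (T Y : Set (PS k n)) : Prop :=
  ∀ t ∈ T, t ≠ o → ∃ y ∈ Y, t.submodule ≤ o.submodule ⊔ y.submodule

/-- A Segre point of the pair `(Y,T)`: projection from `o` maps `Y` and `T`
onto the same set. -/
def SegrePtPair (Y T : Set (PS k n)) (o : PS k n) : Prop :=
  o ∉ Y ∪ T ∧ projLE o Y T ∧ projLE o T Y

/-- A Segre point of `Y`: the projection from `o` is non-birational on `Y`
(it is not generically injective). -/
def SegrePt (Y : Set (PS k n)) (o : PS k n) : Prop :=
  o ∉ Y ∧ ¬ GenericIn Y (fun y => ∀ y' ∈ Y, y'.submodule ≤ o.submodule ⊔ y.submodule → y' = y)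

/-- The Segre locus of `Y`. -/
def segreLocus (Y : Set (PS k n)) : Set (PS k n) := closure {o | SegrePt Y o}

/-- `X` is a cone with vertex `v`. -/
def IsCone (X : Set (PS k n)) (v : PS k n) : Prop :=
  ∀ p ∈ X, ∀ q : PS k n, q.submodule ≤ v.submodule ⊔ p.submodule → q ∈ X

/-- The homogeneous polynomials vanishing on `X`. -/
def homogCut (X : Set (PS k n)) : Set (MvPolynomial (Fin n) k) :=
  {f | (∃ d, f.IsHomogeneous d) ∧ X ⊆ V0 f}

/-- The span of the gradients at `p` of homogeneous polynomials vanishing on `X`. -/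
def gradSpan (X : Set (PS k n)) (p : PS k n) : Submodule k (Fin n → k) :=
  Submodule.span k ((fun f => fun i => eval p.rep (pderiv i f)) '' homogCut X)

/-- Smoothness at a point of an `m`-dimensional subvariety (Jacobian criterion). -/
def IsSmoothPt (X : Set (PS k n)) (m : ℕ) (p : PS k n) : Prop :=
  Module.finrank k ↥(gradSpan X p) = n - (m + 1)

/-- `X` (of dimension `m`) has only isolated singularities. -/
def IsolatedSings (X : Set (PS k n)) (m : ℕ) : Prop :=
  {p ∈ X | ¬ IsSmoothPt X m p}.Finite

/-- `X` (of dimension `m`) is smooth. -/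
def IsSmoothVar (X : Set (PS k n)) (m : ℕ) : Prop := ∀ p ∈ X, IsSmoothPt X m p

/-- The hyperplane (as a submodule) determined by a point of the dual projective space. -/
def hypSub (a : PS k n) : Submodule k (Fin n → k) :=
  LinearMap.ker (∑ i, a.rep i • (LinearMap.proj i : (Fin n → k) →ₗ[k] k))

/-- The hyperplane determined by a point of the dual projective space. -/
def hypOf (a : PS k n) : Set (PS k n) := linSet (hypSub a)

/-- The (geometric) genus of a space curve `C`, defined by the node count of a
projection from a general point of its span: a general point of `⟨C⟩` lies on
`(d-1)(d-2)/2 - g` secant lines of `C`. -/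
def HasGenus (C : Set (PS k n)) (g : ℕ) : Prop :=
  ∃ d : ℕ, HasDegree C 1 d ∧
    GenericIn (linSet (pspan C)) (fun q =>
      2 * (decomps C q).ncard + 2 * g + 3 * d = d * d + 2)

/-- The embedded tangent space of `X` at `p` (as a submodule of the cone). -/
def tangentSub (X : Set (PS k n)) (p : PS k n) : Submodule k (Fin n → k) :=
  ⨅ f ∈ homogCut X,
    LinearMap.ker (∑ i, (eval p.rep (pderiv i f)) • (LinearMap.proj i : (Fin n → k) →ₗ[k] k))

/-- A curve is tangentially degenerate if its general tangent line meets the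
curve elsewhere. -/
def TangDeg (X : Set (PS k n)) : Prop :=
  GenericIn {p ∈ X | IsSmoothPt X 1 p}
    (fun p => ∃ y ∈ X, y ≠ p ∧ y.submodule ≤ tangentSub X p)

/-- The homogeneous ideal of `X`. -/
def projIdeal (X : Set (PS k n)) : Ideal (MvPolynomial (Fin n) k) :=
  Ideal.span {f | X ⊆ V0 f}

/-- `X` is a normal variety: its homogeneous coordinate ring is integrally closed
in its total fraction ring. -/
def IsNormalVar (X : Set (PS k n)) : Prop :=
  ∀ x : FractionRing (MvPolynomial (Fin n) k ⧸ projIdeal X),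
    IsIntegral (MvPolynomial (Fin n) k ⧸ projIdeal X) x →
      ∃ y : MvPolynomial (Fin n) k ⧸ projIdeal X,
        algebraMap (MvPolynomial (Fin n) k ⧸ projIdeal X)
          (FractionRing (MvPolynomial (Fin n) k ⧸ projIdeal X)) y = x

/-- `C` is an irreducible component of `Y`. -/
def IsCompOf (C Y : Set (PS k n)) : Prop :=
  Maximal (fun Z => Z ⊆ Y ∧ IsIrreducible Z) C

/-- The image of `X` under the linear projection from (the linear space of) `W`,
realized inside the complementary linear space of `Λ`. -/
def projFrom (W Λ : Submodule k (Fin n → k)) (X : Set (PS k n)) : Set (PS k n) :=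
  {y | y.submodule ≤ Λ ∧ ∃ x ∈ X, y.submodule ≤ W ⊔ x.submodule}

/-- Decompositions of `q` as irredundant spans of one point from each `Xs i`. -/
def tupleDecomps {s : ℕ} (Xs : Fin s → Set (PS k n)) (q : PS k n) :
    Set (Fin s → PS k n) :=
  {p | (∀ i, p i ∈ Xs i) ∧ Function.Injective p ∧ memSpan q (Set.range p) ∧
    ∀ i, ¬ memSpan q (Set.range p \ {p i})}

/-- The entry locus of `q` with respect to the tuple of varieties `Xs`. -/
def entryLocusT {s : ℕ} (Xs : Fin s → Set (PS k n)) (q : PS k n) : Set (PS k n) :=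
  closure (⋃ p ∈ tupleDecomps Xs q, Set.range p)

/-- The join of the varieties `Xs`. -/
def joinT {s : ℕ} (Xs : Fin s → Set (PS k n)) : Set (PS k n) :=
  closure {q | ∃ p : Fin s → PS k n, (∀ i, p i ∈ Xs i) ∧ memSpan q (Set.range p)}

/-- Relation `q = F(p)` for a tuple `F` of homogeneous polynomials of the same degree. -/
def polyMapRel {N M : ℕ} (F : Fin M → MvPolynomial (Fin N) k) (p : PS k N) (q : PS k M) :
    Prop :=
  q.submodule = Submodule.span k {fun j => eval p.rep (F j)}

/-- `A` and `B` are isomorphic via mutually inverse polynomial maps. -/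
def IsPolyIso {N M : ℕ} (A : Set (PS k N)) (B : Set (PS k M)) : Prop :=
  ∃ (d e : ℕ) (F : Fin M → MvPolynomial (Fin N) k) (G : Fin N → MvPolynomial (Fin M) k),
    (∀ j, (F j).IsHomogeneous d) ∧ (∀ i, (G i).IsHomogeneous e) ∧
    (∀ p ∈ A, ∃ q ∈ B, polyMapRel F p q ∧ polyMapRel G q p) ∧
    (∀ q ∈ B, ∃ p ∈ A, polyMapRel F p q ∧ polyMapRel G q p)

/-- `A` and `B` are birational: polynomially isomorphic on dense open subsets. -/
def Birational (A B : Set (PS k n)) : Prop :=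
  ∃ U V : Set (PS k n), IsOpen U ∧ IsOpen V ∧
    A ⊆ closure (A ∩ U) ∧ B ⊆ closure (B ∩ V) ∧ IsPolyIso (A ∩ U) (B ∩ V)

/-- A finite set `S` imposes independent conditions on hypersurfaces of degree `i`. -/
def ImposesIndep (S : Finset (PS k n)) (i : ℕ) : Prop :=
  Function.Surjective (fun f : ↥(homogeneousSubmodule (Fin n) k i) =>
    fun p : ↥(↑S : Set (PS k n)) => eval (↑p : PS k n).rep (↑f : MvPolynomial (Fin n) k))

end EL

section Aux

open Projectivization EL
open scoped Classical

variable {k : Type} [Field k] {n : ℕ}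

private lemma pt_eq_of_submodule_eq {p q : PS k n} (h : p.submodule = q.submodule) : p = q := by
  have h1 : p.rep ∈ (Submodule.span k {q.rep} : Submodule k (Fin n → k)) := by
    rw [← Projectivization.submodule_eq, ← h, Projectivization.submodule_eq]
    exact Submodule.mem_span_singleton_self _
  obtain ⟨c, hc⟩ := Submodule.mem_span_singleton.1 h1
  rw [← p.mk_rep, ← q.mk_rep, Projectivization.mk_eq_mk_iff']
  exact ⟨c, hc⟩

private lemma rep_mem_submodule (p : PS k n) : p.rep ∈ p.submodule := by
  rw [Projectivization.submodule_eq]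
  exact Submodule.mem_span_singleton_self _

/-- The point obtained by applying a linear map to a projective point (identity fallback). -/
private noncomputable def projPt (π : (Fin n → k) →ₗ[k] (Fin n → k)) (p : PS k n) : PS k n :=
  if h : π p.rep = 0 then p else Projectivization.mk k (π p.rep) h

private lemma projPt_submodule {π : (Fin n → k) →ₗ[k] (Fin n → k)} {p : PS k n}
    (h : π p.rep ≠ 0) : (projPt π p).submodule = Submodule.map π p.submodule := by
  rw [projPt, dif_neg h, Projectivization.submodule_mk, Projectivization.submodule_eq,
    Submodule.map_span, Set.image_singleton]

end Aux

open EL in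
/-- If `Y, T ⊂ ℙ^3` are distinct integral plane curves with `⟨Y ∪ T⟩ = ℙ^3`
and `o` is a Segre point of the pair `(Y,T)`, then `o` lies in neither plane and the
projection from `o` induces an isomorphism `u : ⟨Y⟩ → ⟨T⟩` mapping `Y` onto `T` and
fixing pointwise the line `⟨Y⟩ ∩ ⟨T⟩`. -/
theorem statement2 {k : Type} [Field k] [IsAlgClosed k] [CharZero k]
    (Y T : Set (PS k 4)) (hY : IsVariety Y) (hT : IsVariety T) (hYT : Y ≠ T)
    (hdY : pdim Y = 1) (hdT : pdim T = 1)
    (hsY : spanDim Y = 2) (hsT : spanDim T = 2)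
    (hspan : Nondeg (Y ∪ T))
    (o : PS k 4) (ho : SegrePtPair Y T o) :
    (¬ o.submodule ≤ pspan Y) ∧ (¬ o.submodule ≤ pspan T) ∧
    ∃ u : PS k 4 → PS k 4,
      (∀ y : PS k 4, y.submodule ≤ pspan Y →
        (u y).submodule ≤ pspan T ∧ (u y).submodule ≤ o.submodule ⊔ y.submodule) ∧
      Set.BijOn u (linSet (pspan Y)) (linSet (pspan T)) ∧
      u '' Y = T ∧
      (∀ z : PS k 4, z.submodule ≤ pspan Y ⊓ pspan T → u z = z) := by
  classical
  unfold SegrePtPair projLE at ho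
  obtain ⟨honotin, hYtoT, hTtoY⟩ := ho
  unfold spanDim at hsY hsT
  unfold Nondeg at hspan
  have hfintop : Module.finrank k (Fin 4 → k) = 4 := Module.finrank_fin_fun k
  have hfinY : Module.finrank k ↥(pspan Y) = 3 := by omega
  have hfinT : Module.finrank k ↥(pspan T) = 3 := by omega
  have hmemY : ∀ y ∈ Y, y.submodule ≤ pspan Y := fun y hy =>
    le_iSup₂ (f := fun (p : PS k 4) (_ : p ∈ Y) => p.submodule) y hy
  have hmemT : ∀ t ∈ T, t.submodule ≤ pspan T := fun t ht =>
    le_iSup₂ (f := fun (p : PS k 4) (_ : p ∈ T) => p.submodule) t ht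
  have hsupYT : pspan Y ⊔ pspan T = ⊤ := by
    rw [← hspan]
    exact (iSup_union (f := fun p => Projectivization.submodule p) (s := Y) (t := T)).symm
  -- o is in neither plane
  have hbig : ∀ W : Submodule k (Fin 4 → k), (⊤ : Submodule k (Fin 4 → k)) ≤ W →
      Module.finrank k ↥W = 3 → False := by
    intro W hle hfin
    have h1 : Module.finrank k (⊤ : Submodule k (Fin 4 → k)) ≤ Module.finrank k ↥W :=
      Submodule.finrank_mono hle
    rw [finrank_top, hfintop, hfin] at h1
    omega
  have hoY : ¬ o.submodule ≤ pspan Y := by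
    intro hle
    refine hbig (pspan Y) ?_ hfinY
    rw [← hsupYT]
    refine sup_le le_rfl (iSup₂_le fun t ht => ?_)
    have htno : t ≠ o := fun h => honotin (Or.inr (h ▸ ht))
    obtain ⟨y, hy, hty⟩ := hTtoY t ht htno
    exact hty.trans (sup_le hle (hmemY y hy))
  have hoT : ¬ o.submodule ≤ pspan T := by
    intro hle
    refine hbig (pspan T) ?_ hfinT
    rw [← hsupYT]
    refine sup_le (iSup₂_le fun t ht => ?_) le_rfl
    have htno : t ≠ o := fun h => honotin (Or.inl (h ▸ ht))
    obtain ⟨y, hy, hty⟩ := hYtoT t ht htno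
    exact hty.trans (sup_le hle (hmemT y hy))
  -- disjointness of o with each plane
  have hdisj : ∀ W : Submodule k (Fin 4 → k), ¬ o.submodule ≤ W →
      ∀ v ∈ o.submodule, v ∈ W → v = 0 := by
    intro W hW v hvo hvW
    by_contra hv0
    apply hW
    rw [Projectivization.submodule_eq] at hvo ⊢
    obtain ⟨c, hc⟩ := Submodule.mem_span_singleton.1 hvo
    have hc0 : c ≠ 0 := by rintro rfl; rw [zero_smul] at hc; exact hv0 hc.symm
    have horep : o.rep = c⁻¹ • v := by
      rw [← hc, smul_smul, inv_mul_cancel₀ hc0, one_smul]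
    rw [Submodule.span_le, Set.singleton_subset_iff, horep]
    exact Submodule.smul_mem _ _ hvW
  -- compl of the plane of T and o
  have hinfT : o.submodule ⊓ pspan T = ⊥ := by
    rw [eq_bot_iff]
    intro v hv
    rw [Submodule.mem_inf] at hv
    exact (Submodule.mem_bot k).2 (hdisj _ hoT v hv.1 hv.2)
  have hsupT : o.submodule ⊔ pspan T = ⊤ := by
    apply Submodule.eq_top_of_finrank_eq
    have h1 := Submodule.finrank_sup_add_finrank_inf_eq o.submodule (pspan T)
    rw [hinfT, finrank_bot, Projectivization.finrank_submodule, hfinT] at h1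
    rw [hfintop]
    omega
  have hcompl : IsCompl (pspan T) o.submodule :=
    ⟨disjoint_iff.2 (by rw [inf_comm]; exact hinfT),
     codisjoint_iff.2 (by rw [sup_comm]; exact hsupT)⟩
  -- the projection map
  set π : (Fin 4 → k) →ₗ[k] (Fin 4 → k) :=
    (pspan T).subtype.comp ((pspan T).linearProjOfIsCompl o.submodule hcompl) with hπdef
  have hπT : ∀ v, π v ∈ pspan T := fun v =>
    ((pspan T).linearProjOfIsCompl o.submodule hcompl v).2
  have hπfix : ∀ v ∈ pspan T, π v = v := by
    intro v hv
    exact congrArg Subtype.val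
      (Submodule.projectionOnto_apply_left hcompl ⟨v, hv⟩)
  have hπo : ∀ v ∈ o.submodule, π v = 0 := by
    intro v hv
    have := Submodule.projectionOnto_apply_of_mem_right hcompl hv
    exact congrArg Subtype.val this
  have hker : ∀ v, π v = 0 → v ∈ o.submodule := by
    intro v hv
    have h1 : (pspan T).linearProjOfIsCompl o.submodule hcompl v = 0 := by
      apply Subtype.ext
      simpa [hπdef] using hv
    have := Submodule.linearProjOfIsCompl_ker hcompl (p := pspan T)
    rw [← this]
    exact h1
  have hsub : ∀ v, v - π v ∈ o.submodule := by
    intro v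
    apply hker
    rw [map_sub, hπfix (π v) (hπT v), sub_self]
  -- nonvanishing of π on the plane of Y
  have hne : ∀ p : PS k 4, p.submodule ≤ pspan Y → π p.rep ≠ 0 := by
    intro p hp h0
    have hmem := hker p.rep h0
    have h1 : p.submodule ≤ o.submodule := by
      rw [Projectivization.submodule_eq, Submodule.span_le, Set.singleton_subset_iff]
      exact hmem
    have h2 : p.submodule = o.submodule :=
      Submodule.eq_of_le_of_finrank_le h1
        (by rw [Projectivization.finrank_submodule, Projectivization.finrank_submodule])
    exact hoY (h2 ▸ hp)
  -- fixing submodules inside the plane of T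
  have hmapfix : ∀ p : PS k 4, p.submodule ≤ pspan T →
      Submodule.map π p.submodule = p.submodule := by
    intro p hp
    rw [Projectivization.submodule_eq, Submodule.map_span, Set.image_singleton,
      hπfix p.rep (hp (rep_mem_submodule p))]
  have hmapo : Submodule.map π o.submodule = ⊥ := by
    rw [eq_bot_iff]
    intro x hx
    obtain ⟨v, hv, rfl⟩ := Submodule.mem_map.1 hx
    rw [hπo v hv]
    exact Submodule.zero_mem ⊥
  refine ⟨hoY, hoT, projPt π, ?_, ⟨?_, ?_, ?_⟩, ?_, ?_⟩
  -- (1) projection properties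
  · intro y hy
    rw [projPt_submodule (hne y hy)]
    constructor
    · intro x hx
      obtain ⟨v, hv, rfl⟩ := Submodule.mem_map.1 hx
      exact hπT v
    · intro x hx
      obtain ⟨v, hv, rfl⟩ := Submodule.mem_map.1 hx
      have h1 : v ∈ o.submodule ⊔ y.submodule := Submodule.mem_sup_right hv
      have h2 : v - π v ∈ o.submodule ⊔ y.submodule := Submodule.mem_sup_left (hsub v)
      simpa using sub_mem h1 h2
  -- (2a) MapsTo
  · intro p hp
    have hp' : p.submodule ≤ pspan Y := hp
    show (projPt π p).submodule ≤ pspan T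
    rw [projPt_submodule (hne p hp')]
    intro x hx
    obtain ⟨v, hv, rfl⟩ := Submodule.mem_map.1 hx
    exact hπT v
  -- (2b) InjOn
  · intro p hp p' hp' he
    have hp1 : p.submodule ≤ pspan Y := hp
    have hp2 : p'.submodule ≤ pspan Y := hp'
    apply pt_eq_of_submodule_eq
    have h1 : Submodule.map π p.submodule = Submodule.map π p'.submodule := by
      rw [← projPt_submodule (hne p hp1), ← projPt_submodule (hne p' hp2), he]
    have hπp : π p.rep ∈ Submodule.map π p'.submodule :=
      h1 ▸ Submodule.mem_map_of_mem (rep_mem_submodule p)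
    obtain ⟨w, hw, hww⟩ := Submodule.mem_map.1 hπp
    have h0 : π (p.rep - w) = 0 := by rw [map_sub, hww, sub_self]
    have hmem : p.rep - w ∈ pspan Y := sub_mem (hp1 (rep_mem_submodule p)) (hp2 hw)
    have := hdisj _ hoY _ (hker _ h0) hmem
    have hrw : p.rep = w := by
      have := sub_eq_zero.1 this
      exact this
    have hle : p.submodule ≤ p'.submodule := by
      rw [Projectivization.submodule_eq, Submodule.span_le, Set.singleton_subset_iff, hrw]
      exact hw
    exact Submodule.eq_of_le_of_finrank_le hle
      (by rw [Projectivization.finrank_submodule, Projectivization.finrank_submodule])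
  -- (2c) SurjOn
  · intro q hq
    have hq' : q.submodule ≤ pspan T := hq
    set f : ↥(pspan Y) →ₗ[k] ↥(pspan T) :=
      ((pspan T).linearProjOfIsCompl o.submodule hcompl).comp (pspan Y).subtype with hfdef
    have hcoe : ∀ x : ↥(pspan Y), (f x : Fin 4 → k) = π (x : Fin 4 → k) := fun x => rfl
    have hfinj : Function.Injective f := by
      intro x y hxy
      have hπxy : π (x : Fin 4 → k) = π (y : Fin 4 → k) := by
        rw [← hcoe, ← hcoe, hxy]
      have h0 : π ((x : Fin 4 → k) - (y : Fin 4 → k)) = 0 := by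
        rw [map_sub, hπxy, sub_self]
      have := hdisj _ hoY _ (hker _ h0) (sub_mem x.2 y.2)
      exact Subtype.ext (sub_eq_zero.1 this)
    have hfsurj : Function.Surjective f :=
      (LinearMap.injective_iff_surjective_of_finrank_eq_finrank
        (by rw [hfinY, hfinT])).1 hfinj
    obtain ⟨x, hx⟩ := hfsurj ⟨q.rep, hq' (rep_mem_submodule q)⟩
    have hπx : π (x : Fin 4 → k) = q.rep := by rw [← hcoe, hx]
    have hx0 : (x : Fin 4 → k) ≠ 0 := by
      intro h
      exact q.rep_nonzero (by rw [← hπx, h, map_zero])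
    refine ⟨Projectivization.mk k (x : Fin 4 → k) hx0, ?_, ?_⟩
    · show (Projectivization.mk k (x : Fin 4 → k) hx0).submodule ≤ pspan Y
      rw [Projectivization.submodule_mk, Submodule.span_le, Set.singleton_subset_iff]
      exact x.2
    · have hsubY : (Projectivization.mk k (x : Fin 4 → k) hx0).submodule ≤ pspan Y := by
        rw [Projectivization.submodule_mk, Submodule.span_le, Set.singleton_subset_iff]
        exact x.2
      apply pt_eq_of_submodule_eq
      rw [projPt_submodule (hne _ hsubY), Projectivization.submodule_mk, Submodule.map_span,
        Set.image_singleton, hπx, ← Projectivization.submodule_eq]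
  -- (3) u '' Y = T
  · apply subset_antisymm
    · rintro _ ⟨y, hy, rfl⟩
      have hyW := hmemY y hy
      have hyo : y ≠ o := fun h => honotin (Or.inl (h ▸ hy))
      obtain ⟨t, ht, hle⟩ := hYtoT y hy hyo
      have h1 : (projPt π y).submodule ≤ t.submodule := by
        rw [projPt_submodule (hne y hyW)]
        calc Submodule.map π y.submodule
            ≤ Submodule.map π (o.submodule ⊔ t.submodule) := Submodule.map_mono hle
          _ = t.submodule := by
              rw [Submodule.map_sup, hmapo, hmapfix t (hmemT t ht), bot_sup_eq]
      have h2 : (projPt π y).submodule = t.submodule :=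
        Submodule.eq_of_le_of_finrank_le h1
          (by rw [Projectivization.finrank_submodule, Projectivization.finrank_submodule])
      exact (pt_eq_of_submodule_eq h2) ▸ ht
    · intro t ht
      have hto : t ≠ o := fun h => honotin (Or.inr (h ▸ ht))
      obtain ⟨y, hy, hle⟩ := hTtoY t ht hto
      refine ⟨y, hy, ?_⟩
      have h1 : t.submodule ≤ (projPt π y).submodule := by
        rw [← hmapfix t (hmemT t ht), projPt_submodule (hne y (hmemY y hy))]
        calc Submodule.map π t.submodule
            ≤ Submodule.map π (o.submodule ⊔ y.submodule) := Submodule.map_mono hle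
          _ = Submodule.map π y.submodule := by rw [Submodule.map_sup, hmapo, bot_sup_eq]
      exact pt_eq_of_submodule_eq (Submodule.eq_of_le_of_finrank_le h1
        (by rw [Projectivization.finrank_submodule, Projectivization.finrank_submodule])).symm
  -- (4) fixes the line
  · intro z hz
    have hz1 : z.submodule ≤ pspan Y := hz.trans inf_le_left
    have hz2 : z.submodule ≤ pspan T := hz.trans inf_le_right
    apply pt_eq_of_submodule_eq
    rw [projPt_submodule (hne z hz1), hmapfix z hz2]
end
end

section
/- Let X ⊂ P^r be an integral nondegenerate projective variety with generic X-rank s, and suppose X is of type A, i.e. for general q ∈ P^r the entry locus satisfies Γ_o(X) = Γ_q(X) for general o in the span ⟨Γ_q(X)⟩. Then for a general o ∈ ⟨Γ_q(X)⟩: (1) the X-rank of o equals the Γ_q(X)-rank of o, and (2) Γ_o(Γ_q(X)) = Γ_q(X). -/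
open MvPolynomial

noncomputable section

open EL in
lemma statement5_key {k : Type} [Field k] {n : ℕ} (X : Set (PS k n))
    (hX : IsClosed X) (o : PS k n) :
    rk X o = rk (entryLocus X o) o ∧
    entryLocus (entryLocus X o) o = entryLocus X o := by
  have hGX : entryLocus X o ⊆ X :=
    closure_minimal (Set.iUnion₂_subset fun A hA => hA.1) hX
  have hdsub : ∀ A ∈ decomps X o, (↑A : Set (PS k n)) ⊆ entryLocus X o :=
    fun A hA p hp => subset_closure (Set.mem_biUnion hA hp)
  have hsub : {s | hasDecomp (entryLocus X o) o s} ⊆ {s | hasDecomp X o s} := by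
    rintro s ⟨A, hA, hc, hm⟩
    exact ⟨A, hA.trans hGX, hc, hm⟩
  have hrk : rk X o = rk (entryLocus X o) o := by
    by_cases hne : {s | hasDecomp X o s}.Nonempty
    · obtain ⟨A, hAX, hcard, hspan⟩ := Nat.sInf_mem hne
      have hirr : Irredundant o A := by
        refine ⟨hspan, fun B hB hBm => ?_⟩
        have h1 : rk X o ≤ B.card :=
          Nat.sInf_le ⟨B, (Finset.coe_subset.mpr hB.subset).trans hAX, rfl, hBm⟩
        have h2 : B.card < A.card := Finset.card_lt_card hB
        have h3 : A.card = rk X o := hcard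
        omega
      have hAd : A ∈ decomps X o := ⟨hAX, hcard, hirr⟩
      have hAG : (↑A : Set (PS k n)) ⊆ entryLocus X o := hdsub A hAd
      have hne2 : {s | hasDecomp (entryLocus X o) o s}.Nonempty :=
        ⟨rk X o, A, hAG, hcard, hspan⟩
      have h1 : rk (entryLocus X o) o ≤ rk X o := Nat.sInf_le ⟨A, hAG, hcard, hspan⟩
      have h2 : rk X o ≤ rk (entryLocus X o) o := Nat.sInf_le (hsub (Nat.sInf_mem hne2))
      omega
    · have he : {s | hasDecomp X o s} = ∅ := Set.not_nonempty_iff_eq_empty.mp hne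
      have he2 : {s | hasDecomp (entryLocus X o) o s} = ∅ :=
        Set.eq_empty_of_subset_empty (he ▸ hsub)
      simp [rk, he, he2]
  refine ⟨hrk, ?_⟩
  have hdec : decomps (entryLocus X o) o = decomps X o := by
    ext A
    constructor
    · rintro ⟨hA, hc, hi⟩
      exact ⟨hA.trans hGX, by rw [hc, ← hrk], hi⟩
    · rintro ⟨hA, hc, hi⟩
      exact ⟨hdsub A ⟨hA, hc, hi⟩, by rw [hc, hrk], hi⟩
  show closure (⋃ A ∈ decomps (entryLocus X o) o, (↑A : Set (PS k n))) = entryLocus X o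
  rw [hdec]
  rfl

open EL in
/-- If `X` is of type A, then for general `q` and general `o` in the span of
the entry locus `Γ_q(X)`, the `X`-rank of `o` equals its `Γ_q(X)`-rank, and
`Γ_o(Γ_q(X)) = Γ_q(X)`. -/
theorem statement5 {k : Type} [Field k] [IsAlgClosed k] [CharZero k]
    (r : ℕ) (X : Set (PS k (r+1))) (hX : IsVariety X) (hnd : Nondeg X)
    (hA : TypeA X) :
    Generic (fun q : PS k (r+1) =>
      GenericIn (linSet (pspan (entryLocus X q))) (fun o =>
        rk X o = rk (entryLocus X q) o ∧
        entryLocus (entryLocus X q) o = entryLocus X q)) := by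
  obtain ⟨U, hU, hdU, hP⟩ := hA
  refine ⟨U, hU, hdU, fun q hq => ?_⟩
  obtain ⟨V, hV, hdV, hPo⟩ := hP q hq
  refine ⟨V, hV, hdV, fun o ho => ?_⟩
  have h := hPo o ho
  rw [← h]
  exact statement5_key X hX.1 o
end
end
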